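/- Every convex body K in ℝ^n can be approximated arbitrarily closely in the Hausdorff metric by polytopes P such that for every vector u in a given finite set M ⊂ S^{n−1}, the face F(P,u) is a centrally symmetric facet of P. -/

import Mathlib

/-!
Take a finite `ε/2`-net `T ⊆ K`. For each `u ∈ M` let `top u ∈ T` maximise `⟪·, u⟫` on `T`, and
add the vertices of a cross-polytope of small radius `ρ` lying in the hyperplane orthogonal to `u`
through `top u + δ u`. All of them are strictly higher in direction `u` than every other vertex as
soon as `ρ < δ (1 - ⟪v, u⟫)` for all `v ≠ u` in `M`, which can be arranged because distinct unit
vectors have `⟪v, u⟫ < 1`. The face of the hull in direction `u` is then that cross-polytope, an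
`(n-1)`-dimensional centrally symmetric set, while every vertex stays within `δ + ρ` of `K`.
-/

open scoped RealInnerProductSpace Pointwise

variable {n : ℕ}

/-- The support set `F_K(u) = {x ∈ K : ⟪x,u⟫ = h_K(u)}`. -/
def supportSet (K : Set (EuclideanSpace ℝ (Fin n))) (u : EuclideanSpace ℝ (Fin n)) :
    Set (EuclideanSpace ℝ (Fin n)) :=
  {x ∈ K | ⟪x, u⟫ = sSup ((fun y => ⟪y, u⟫) '' K)}

open Set Metric Module Filter Topology

section CrossPolytope

variable {E : Type*} [NormedAddCommGroup E] [InnerProductSpace ℝ E]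
  (W : Submodule ℝ E) [FiniteDimensional ℝ W] (c : E) (r : ℝ)

/-- The centre `c` is included so that the set is nonempty even when `W = ⊥`. -/
def crossPolytopeVertices : Set E :=
  insert c (range (fun i => c + r • (stdOrthonormalBasis ℝ W i : E)) ∪
    range (fun i => c - r • (stdOrthonormalBasis ℝ W i : E)))

variable {W c r}

lemma crossPolytopeVertices_finite : (crossPolytopeVertices W c r).Finite :=
  ((finite_range _).union (finite_range _)).insert c

lemma self_mem_crossPolytopeVertices : c ∈ crossPolytopeVertices W c r := mem_insert c _

lemma sub_mem_of_mem_crossPolytopeVertices {x : E} (hx : x ∈ crossPolytopeVertices W c r) :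
    x - c ∈ W := by
  rcases hx with rfl | ⟨i, rfl⟩ | ⟨i, rfl⟩ <;> simp [W.smul_mem]

lemma norm_sub_le_of_mem_crossPolytopeVertices (hr : 0 ≤ r) {x : E}
    (hx : x ∈ crossPolytopeVertices W c r) : ‖x - c‖ ≤ r := by
  have hb (i) : ‖(stdOrthonormalBasis ℝ W i : E)‖ = 1 := (stdOrthonormalBasis ℝ W).orthonormal.1 i
  rcases hx with rfl | ⟨i, rfl⟩ | ⟨i, rfl⟩ <;> simp [norm_smul, hb, abs_of_nonneg hr, hr]

lemma image_sub_crossPolytopeVertices :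
    (fun x => (c + c) - x) '' crossPolytopeVertices W c r = crossPolytopeVertices W c r := by
  have hmaps : ∀ x ∈ crossPolytopeVertices W c r, (c + c) - x ∈ crossPolytopeVertices W c r := by
    rintro x (rfl | ⟨i, rfl⟩ | ⟨i, rfl⟩)
    · simp [self_mem_crossPolytopeVertices]
    · exact Or.inr (Or.inr ⟨i, by dsimp only; abel⟩)
    · exact Or.inr (Or.inl ⟨i, by dsimp only; abel⟩)
  exact (image_subset_iff.2 hmaps).antisymm fun x hx => ⟨_, hmaps x hx, sub_sub_cancel _ _⟩

lemma vectorSpan_crossPolytopeVertices (hr : r ≠ 0) :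
    vectorSpan ℝ (crossPolytopeVertices W c r) = W := by
  apply le_antisymm
  · refine Submodule.span_le.2 ?_
    rintro _ ⟨x, hx, y, hy, rfl⟩
    simpa using W.sub_mem (sub_mem_of_mem_crossPolytopeVertices hx)
      (sub_mem_of_mem_crossPolytopeVertices hy)
  · have hb (i) : (stdOrthonormalBasis ℝ W i : E) ∈ vectorSpan ℝ (crossPolytopeVertices W c r) := by
      have hi : c + r • (stdOrthonormalBasis ℝ W i : E) ∈ crossPolytopeVertices W c r :=
        Or.inr (Or.inl ⟨i, rfl⟩)
      simpa [hr] using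
        Submodule.smul_mem _ r⁻¹ (vsub_mem_vectorSpan ℝ hi self_mem_crossPolytopeVertices)
    intro w hw
    have := congrArg Subtype.val ((stdOrthonormalBasis ℝ W).sum_repr ⟨w, hw⟩)
    simp only [Submodule.coe_sum, Submodule.coe_smul] at this
    rw [← this]
    exact Submodule.sum_mem _ fun i _ => Submodule.smul_mem _ _ (hb i)

lemma inner_eq_of_mem_crossPolytopeVertices [FiniteDimensional ℝ E] {u x : E}
    (hx : x ∈ crossPolytopeVertices (ℝ ∙ u)ᗮ c r) : ⟪x, u⟫ = ⟪c, u⟫ := by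
  have := Submodule.mem_orthogonal_singleton_iff_inner_left.1
    (sub_mem_of_mem_crossPolytopeVertices hx)
  rwa [inner_sub_left, sub_eq_zero] at this

end CrossPolytope

section
variable {E : Type*} [NormedAddCommGroup E] [InnerProductSpace ℝ E]

lemma exists_pos_forall_lt_mul_one_sub_inner (M : Finset E) (hM : ∀ u ∈ M, ‖u‖ = 1) {δ : ℝ}
    (hδ : 0 < δ) : ∃ ρ, 0 < ρ ∧ ρ ≤ δ ∧ ∀ u ∈ M, ∀ v ∈ M, u ≠ v → ρ < δ * (1 - ⟪v, u⟫) := by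
  have hgap : ∀ᶠ ρ in 𝓝 (0 : ℝ), ∀ u ∈ M, ∀ v ∈ M, u ≠ v → ρ < δ * (1 - ⟪v, u⟫) := by
    refine (eventually_all_finset M).2 fun u hu => (eventually_all_finset M).2 fun v hv =>
      eventually_imp_distrib_left.2 fun huv => ?_
    have : ⟪v, u⟫ < 1 := (inner_lt_one_iff_real_of_norm_eq_one (hM v hv) (hM u hu)).2 huv.symm
    exact eventually_lt_nhds (by nlinarith)
  obtain ⟨ρ, ⟨hρgap, hρδ⟩, hρ⟩ :=
    (((hgap.and (eventually_le_nhds hδ)).filter_mono nhdsWithin_le_nhds).and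
      self_mem_nhdsWithin).exists (f := 𝓝[>] (0 : ℝ))
  exact ⟨ρ, hρ, hρδ, hρgap⟩

lemma hausdorffDist_convexHull_le {K V : Set E} {r : ℝ} (hK : Convex ℝ K) (hr : 0 ≤ r)
    (hVK : ∀ x ∈ V, ∃ y ∈ K, dist x y ≤ r) (hKV : ∀ y ∈ K, ∃ x ∈ V, dist y x ≤ r) :
    hausdorffDist (convexHull ℝ V) K ≤ r := by
  have hV : convexHull ℝ V ⊆ K + closedBall 0 r := by
    refine convexHull_min (fun x hx => ?_) (hK.add (convex_closedBall 0 r))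
    obtain ⟨y, hy, hxy⟩ := hVK x hx
    exact ⟨y, hy, x - y, by rwa [mem_closedBall_zero_iff, ← dist_eq_norm], add_sub_cancel _ _⟩
  refine hausdorffDist_le_of_mem_dist hr (fun x hx => ?_) fun y hy => ?_
  · obtain ⟨y, hy, z, hz, rfl⟩ := hV hx
    exact ⟨y, hy, by simpa using hz⟩
  · obtain ⟨x, hx, hyx⟩ := hKV y hy
    exact ⟨x, subset_convexHull ℝ V hx, hyx⟩

lemma vectorSpan_convexHull (s : Set E) : vectorSpan ℝ (convexHull ℝ s) = vectorSpan ℝ s := by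
  rw [← direction_affineSpan, affineSpan_convexHull, direction_affineSpan]

lemma image_sub_convexHull {s : Set E} {c : E} (hs : (fun x => c - x) '' s = s) :
    (fun x => c - x) '' convexHull ℝ s = convexHull ℝ s := by
  have := (AffineMap.const ℝ E c - AffineMap.id ℝ E).image_convexHull s
  exact this.trans (congrArg _ hs)

lemma finrank_orthogonal_span_singleton_eq_sub_one [FiniteDimensional ℝ E] {u : E} (hu : u ≠ 0) :
    finrank ℝ (ℝ ∙ u)ᗮ = finrank ℝ E - 1 := by
  have := (ℝ ∙ u).finrank_add_finrank_orthogonal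
  rw [finrank_span_singleton hu] at this
  omega

end

lemma supportSet_convexHull_eq_of_inner_lt {V A : Set (EuclideanSpace ℝ (Fin n))}
    {u : EuclideanSpace ℝ (Fin n)} {c : ℝ} (hA : A.Nonempty) (hAV : A ⊆ V)
    (hAu : ∀ a ∈ A, ⟪a, u⟫ = c) (hVu : ∀ x ∈ V, x ∉ A → ⟪x, u⟫ < c) :
    supportSet (convexHull ℝ V) u = convexHull ℝ A := by
  have hlin : IsLinearMap ℝ fun x : EuclideanSpace ℝ (Fin n) => ⟪x, u⟫ :=
    ⟨fun x y => inner_add_left x y u, fun a x => real_inner_smul_left x u a⟩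
  have hAc : convexHull ℝ A ⊆ {x | ⟪x, u⟫ = c} :=
    convexHull_min hAu (convex_hyperplane hlin c)
  have hsup : sSup ((fun y => ⟪y, u⟫) '' convexHull ℝ V) = c := by
    refine IsGreatest.csSup_eq ⟨?_, ?_⟩
    · obtain ⟨a, ha⟩ := hA
      exact ⟨a, subset_convexHull ℝ V (hAV ha), hAu a ha⟩
    · rintro _ ⟨x, hx, rfl⟩
      refine convexHull_min (fun y hy => ?_) (convex_halfSpace_le hlin c) hx
      by_cases hyA : y ∈ A
      exacts [(hAu y hyA).le, (hVu y hy hyA).le]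
  refine Subset.antisymm ?_ fun x hx => ⟨convexHull_mono hAV hx, (hAc hx).trans hsup.symm⟩
  rintro x ⟨hxV, hxu⟩
  rw [hsup] at hxu
  obtain hB | hB := (V \ A).eq_empty_or_nonempty
  · rwa [← union_sdiff_cancel hAV, hB, union_empty] at hxV
  rw [← union_sdiff_cancel hAV, convexHull_union hA hB] at hxV
  obtain ⟨a, ha, b, hb, α, β, hα, hβ, hαβ, rfl⟩ := mem_convexJoin.1 hxV
  have hbc : ⟪b, u⟫ < c :=
    convexHull_min (fun y hy => hVu y hy.1 hy.2) (convex_halfSpace_lt hlin c) hb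
  have hβ0 : β = 0 := by
    have hx : α * ⟪a, u⟫ + β * ⟪b, u⟫ = c := by
      rw [← hxu, inner_add_left, real_inner_smul_left, real_inner_smul_left]
    have hau : ⟪a, u⟫ = c := hAc ha
    have : β * (c - ⟪b, u⟫) = 0 := by linear_combination c * hαβ - hx + α * hau
    exact (mul_eq_zero.1 this).resolve_right (sub_pos.2 hbc).ne'
  simpa [hβ0, show α = 1 by linarith] using ha

section FacetVertices

variable {E : Type*} [NormedAddCommGroup E] [InnerProductSpace ℝ E] [FiniteDimensional ℝ E]
  {top : E → E} {δ ρ : ℝ} {u v x : E}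

def facetVertices (top : E → E) (δ ρ : ℝ) (u : E) : Set E :=
  crossPolytopeVertices (ℝ ∙ u)ᗮ (top u + δ • u) ρ

lemma inner_eq_of_mem_facetVertices (hu : ‖u‖ = 1) (hx : x ∈ facetVertices top δ ρ u) :
    ⟪x, u⟫ = ⟪top u, u⟫ + δ := by
  rw [inner_eq_of_mem_crossPolytopeVertices hx, inner_add_left, real_inner_smul_left,
    real_inner_self_eq_norm_sq, hu, one_pow, mul_one]

lemma inner_le_of_mem_facetVertices (hu : ‖u‖ = 1) (hρ : 0 ≤ ρ)
    (hx : x ∈ facetVertices top δ ρ v) : ⟪x, u⟫ ≤ ⟪top v, u⟫ + δ * ⟪v, u⟫ + ρ := by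
  have hxc := norm_sub_le_of_mem_crossPolytopeVertices hρ hx
  have := real_inner_le_norm (x - (top v + δ • v)) u
  rw [hu, mul_one, inner_sub_left, inner_add_left, real_inner_smul_left] at this
  linarith

lemma dist_le_of_mem_facetVertices (hv : ‖v‖ = 1) (hδ : 0 ≤ δ) (hρ : 0 ≤ ρ)
    (hx : x ∈ facetVertices top δ ρ v) : dist x (top v) ≤ δ + ρ := by
  have hxc := norm_sub_le_of_mem_crossPolytopeVertices hρ hx
  calc dist x (top v) = ‖δ • v + (x - (top v + δ • v))‖ := by rw [dist_eq_norm]; abel_nf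
    _ ≤ δ + ρ := by
      refine (norm_add_le _ _).trans (add_le_add ?_ hxc)
      rw [norm_smul, hv, mul_one, Real.norm_of_nonneg hδ]

end FacetVertices

lemma supportSet_convexHull_union_facetVertices {T M : Set (EuclideanSpace ℝ (Fin n))}
    (hM : ∀ u ∈ M, ‖u‖ = 1) {top : EuclideanSpace ℝ (Fin n) → EuclideanSpace ℝ (Fin n)}
    (htopT : ∀ u, top u ∈ T) (htop : ∀ u, ∀ y ∈ T, ⟪y, u⟫ ≤ ⟪top u, u⟫) {δ ρ : ℝ}
    (hδ : 0 < δ) (hρ : 0 ≤ ρ) (hgap : ∀ u ∈ M, ∀ v ∈ M, u ≠ v → ρ < δ * (1 - ⟪v, u⟫))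
    {u : EuclideanSpace ℝ (Fin n)} (hu : u ∈ M) :
    supportSet (convexHull ℝ (T ∪ ⋃ v ∈ M, facetVertices top δ ρ v)) u =
      convexHull ℝ (facetVertices top δ ρ u) := by
  refine supportSet_convexHull_eq_of_inner_lt ⟨_, self_mem_crossPolytopeVertices⟩
    (subset_union_of_subset_right (subset_biUnion_of_mem hu) T)
    (fun x hx => inner_eq_of_mem_facetVertices (hM u hu) hx) ?_
  rintro x (hxT | hx) hxu
  · linarith [htop u x hxT]
  · obtain ⟨v, hv, hxv⟩ := mem_iUnion₂.1 hx
    have hvu : u ≠ v := by rintro rfl; exact hxu hxv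
    linarith [inner_le_of_mem_facetVertices (hM u hu) hρ hxv, htop u _ (htopT v),
      hgap u hu v hv hvu]

/-- Every convex body `K` in `ℝⁿ` can be approximated arbitrarily closely in the Hausdorff
metric by polytopes `P` such that for every `u` in a given finite set `M ⊆ S^{n-1}`, the face
`F(P,u)` is a centrally symmetric facet (`(n-1)`-dimensional face) of `P`. -/
theorem stmt15 (K : ConvexBody (EuclideanSpace ℝ (Fin n)))
    (M : Finset (EuclideanSpace ℝ (Fin n)))
    (hM : ∀ u ∈ M, ‖u‖ = 1) (ε : ℝ) (hε : 0 < ε) :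
    ∃ P : Set (EuclideanSpace ℝ (Fin n)),
      (∃ S : Finset (EuclideanSpace ℝ (Fin n)), P = convexHull ℝ (S : Set _)) ∧
      P.Nonempty ∧
      Metric.hausdorffDist P (K : Set (EuclideanSpace ℝ (Fin n))) < ε ∧
      ∀ u ∈ M,
        Module.finrank ℝ (vectorSpan ℝ (supportSet P u)) = n - 1 ∧
        ∃ c : EuclideanSpace ℝ (Fin n), supportSet P u = (fun x => c - x) '' supportSet P u := by
  obtain ⟨T, hTK, hT, hKT⟩ :=
    finite_approx_of_totallyBounded K.isCompact.totallyBounded (ε / 2) (by positivity)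
  have hTne : T.Nonempty := by
    obtain ⟨x, hx⟩ := K.nonempty
    obtain ⟨y, hy, -⟩ := mem_iUnion₂.1 (hKT hx)
    exact ⟨y, hy⟩
  obtain ⟨ρ, hρ, hρδ, hgap⟩ :=
    exists_pos_forall_lt_mul_one_sub_inner M hM (by positivity : 0 < ε / 4)
  choose top htopT htop using fun u => T.exists_max_image (fun y => ⟪y, u⟫) hT hTne
  set V := T ∪ ⋃ v ∈ (M : Set _), facetVertices top (ε / 4) ρ v
  have hV : V.Finite := hT.union (M.finite_toSet.biUnion fun v _ => crossPolytopeVertices_finite)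
  refine ⟨convexHull ℝ V, ⟨hV.toFinset, by rw [hV.coe_toFinset]⟩,
    hTne.mono (subset_union_left.trans (subset_convexHull ℝ V)), ?_, fun u hu => ?_⟩
  · have hVK : ∀ x ∈ V, ∃ y ∈ (K : Set _), dist x y ≤ ε / 2 := by
      rintro x (hxT | hx)
      · exact ⟨x, hTK hxT, by rw [dist_self]; positivity⟩
      · obtain ⟨v, hv, hxv⟩ := mem_iUnion₂.1 hx
        exact ⟨top v, hTK (htopT v),
          (dist_le_of_mem_facetVertices (hM v hv) (by positivity) hρ.le hxv).trans (by linarith)⟩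
    have hKV : ∀ y ∈ (K : Set _), ∃ x ∈ V, dist y x ≤ ε / 2 := fun y hy => by
      obtain ⟨x, hx, hyx⟩ := mem_iUnion₂.1 (hKT hy)
      exact ⟨x, Or.inl hx, (mem_ball.1 hyx).le⟩
    exact (hausdorffDist_convexHull_le K.convex (by positivity) hVK hKV).trans_lt (by linarith)
  · have hu0 : u ≠ 0 := by rintro rfl; simpa using hM 0 hu
    rw [supportSet_convexHull_union_facetVertices hM htopT htop (by positivity) hρ.le hgap hu]
    refine ⟨?_, _, (image_sub_convexHull image_sub_crossPolytopeVertices).symm⟩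
    rw [vectorSpan_convexHull, facetVertices, vectorSpan_crossPolytopeVertices hρ.ne',
      finrank_orthogonal_span_singleton_eq_sub_one hu0, finrank_euclideanSpace_fin]
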